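/- Define f_d(q) ∈ ℚ(q) for d ≥ 1 by f_1 = q^m and, via the generating-function relation, suppose ∑_{d≥1} f_d(q) x^d = a(q) satisfies Exp((a(q) − x)/(1−q))|_{q=1} = 1 − m x (evaluation at q = 1 well-defined). Then for all d ≥ 2, f_d(q)/(q−1) evaluated at q = 1 equals (1/d)∑_{k|d} μ(d/k) m^k. -/

import Mathlib

open PowerSeries

/-- `K = ℚ(q)`, the field of rational functions in q over ℚ. -/
noncomputable abbrev K := RatFunc ℚ

/-- The variable q of ℚ(q). -/
noncomputable abbrev q : K := RatFunc.X

/-- The Adams operation `q ↦ q^k` on ℚ(q), computed on numerator and denominator. -/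
noncomputable def psiQ (k : ℕ) (r : K) : K :=
  algebraMap (Polynomial ℚ) K (r.num.comp (Polynomial.X ^ k)) /
    algebraMap (Polynomial ℚ) K (r.denom.comp (Polynomial.X ^ k))

/-- Formal exponential of a power series with zero constant term, written coefficientwise. -/
noncomputable def pexp (f : PowerSeries K) : PowerSeries K :=
  PowerSeries.mk fun n =>
    ∑ k ∈ Finset.range (n + 1), ((k.factorial : K))⁻¹ * PowerSeries.coeff n (f ^ k)

/-- The plethystic exponential `Exp(f) = exp(∑_{k≥1} ψ_k(f)/k)` for f with zero constant
term, with Adams operations q ↦ q^k, x ↦ x^k. -/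
noncomputable def pExp (f : PowerSeries K) : PowerSeries K :=
  pexp (PowerSeries.mk fun n =>
    ∑ k ∈ n.divisors, (k : K)⁻¹ * psiQ k (PowerSeries.coeff (n / k) f))

/-- Evaluation of a rational function at q = 1 (meaningful when the denominator does not
vanish at 1). -/
noncomputable def ev1 (r : K) : ℚ := r.num.eval 1 / r.denom.eval 1

/-!
The coefficients `g_n` of `g = (a(q) - x)/(1 - q)` and those of the exponent
`h = ∑_k ψ_k(g)/k` of `Exp(g) = exp(h)` determine each other triangularly over the subring of
ℚ(q) of functions regular at `q = 1`: `h_n = g_n + (terms in g_j, j < n)`, and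
`[xⁿ] exp(h) = h_n + (terms in h_j, j < n)`. So regularity of `Exp(g)` at `q = 1` forces
regularity of `g`. Evaluation at `q = 1` is then a ring homomorphism on the coefficients, it
commutes with the Adams operations, and turns the hypothesis into `exp(L) = 1 - m x` with
`L_n = ∑_{k ∣ n} g_{n/k}(1)/k`. Differentiating gives `L_n = -mⁿ/n`, and Möbius inversion
yields `-g_n(1) = f_n/(q - 1)|_{q=1} = (1/n) ∑_{k ∣ n} μ(n/k) mᵏ`.
-/

def regularAtOne : Subalgebra ℚ K where
  carrier := {r | r.denom.eval 1 ≠ 0}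
  mul_mem' {x y} hx hy := ne_zero_of_dvd_ne_zero (by simp_all)
    (Polynomial.eval_dvd (RatFunc.denom_mul_dvd x y))
  add_mem' {x y} hx hy := ne_zero_of_dvd_ne_zero (by simp_all)
    (Polynomial.eval_dvd (RatFunc.denom_add_dvd x y))
  algebraMap_mem' c := by
    change (algebraMap ℚ K c).denom.eval 1 ≠ 0
    rw [RingHom.ext_rat (algebraMap ℚ K) RatFunc.C, RatFunc.denom_C, Polynomial.eval_one]
    exact one_ne_zero

lemma ev1_eq_eval (r : K) : ev1 r = RatFunc.eval (RingHom.id ℚ) 1 r := rfl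

noncomputable def evalOne : regularAtOne →+* ℚ where
  toFun r := ev1 r
  map_one' := by simp [ev1_eq_eval]
  map_zero' := by simp [ev1_eq_eval]
  map_mul' x y := by
    simpa [ev1_eq_eval] using RatFunc.eval_mul (RingHom.id ℚ) 1 x.2 y.2
  map_add' x y := by
    simpa [ev1_eq_eval] using RatFunc.eval_add (RingHom.id ℚ) 1 x.2 y.2

lemma evalOne_apply (r : regularAtOne) : evalOne r = ev1 r := rfl

lemma ev1_mul {x y : K} (hx : x ∈ regularAtOne) (hy : y ∈ regularAtOne) :
    ev1 (x * y) = ev1 x * ev1 y :=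
  map_mul evalOne ⟨x, hx⟩ ⟨y, hy⟩

lemma ev1_neg {x : K} (hx : x ∈ regularAtOne) : ev1 (-x) = -ev1 x :=
  map_neg evalOne ⟨x, hx⟩

lemma ev1_sum {ι : Type*} (s : Finset ι) {F : ι → K} (hF : ∀ i, F i ∈ regularAtOne) :
    ev1 (∑ i ∈ s, F i) = ∑ i ∈ s, ev1 (F i) := by
  have := map_sum evalOne (fun i => ⟨F i, hF i⟩) s
  simp only [evalOne_apply] at this
  rw [← this]
  simp

lemma ev1_algebraMap (c : ℚ) : ev1 (algebraMap ℚ K c) = c :=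
  evalOne.map_rat_algebraMap c

lemma ev1_algebraMap_polynomial (p : Polynomial ℚ) :
    ev1 (algebraMap (Polynomial ℚ) K p) = p.eval 1 := by
  simp [ev1]

lemma div_mem_regularAtOne {p s : Polynomial ℚ} (hs : s.eval 1 ≠ 0) :
    algebraMap (Polynomial ℚ) K p / algebraMap (Polynomial ℚ) K s ∈ regularAtOne :=
  ne_zero_of_dvd_ne_zero hs (Polynomial.eval_dvd (RatFunc.denom_div_dvd p s))

lemma ev1_div {p s : Polynomial ℚ} (hs : s.eval 1 ≠ 0) :
    ev1 (algebraMap (Polynomial ℚ) K p / algebraMap (Polynomial ℚ) K s) = p.eval 1 / s.eval 1 := by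
  have hs0 : algebraMap (Polynomial ℚ) K s ≠ 0 :=
    RatFunc.algebraMap_ne_zero fun h => hs (by simp [h])
  have hsmem : algebraMap (Polynomial ℚ) K s ∈ regularAtOne := by
    simpa using div_mem_regularAtOne (p := s) (s := 1) (by simp)
  rw [eq_div_iff hs, ← ev1_algebraMap_polynomial, ← ev1_algebraMap_polynomial,
    ← ev1_mul (div_mem_regularAtOne hs) hsmem, div_mul_cancel₀ _ hs0]

lemma eval_one_comp_X_pow (p : Polynomial ℚ) (k : ℕ) :
    (p.comp (Polynomial.X ^ k)).eval 1 = p.eval 1 := by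
  simp [Polynomial.eval_comp]

lemma psiQ_one (r : K) : psiQ 1 r = r := by
  rw [psiQ, pow_one, Polynomial.comp_X, Polynomial.comp_X, RatFunc.num_div_denom]

lemma psiQ_mem {r : K} (hr : r ∈ regularAtOne) (k : ℕ) : psiQ k r ∈ regularAtOne :=
  div_mem_regularAtOne (by rwa [eval_one_comp_X_pow])

lemma ev1_psiQ {r : K} (hr : r ∈ regularAtOne) (k : ℕ) : ev1 (psiQ k r) = ev1 r := by
  rw [psiQ, ev1_div (by rwa [eval_one_comp_X_pow]), eval_one_comp_X_pow, eval_one_comp_X_pow]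
  rfl

lemma Subalgebra.inv_natCast_mem {F : Type*} [Field F] [Algebra ℚ F] (S : Subalgebra ℚ F)
    (k : ℕ) : (k : F)⁻¹ ∈ S := by
  simpa using S.algebraMap_mem (k : ℚ)⁻¹

namespace PowerSeries

section SubringClass

variable {A σ : Type*} [CommRing A] [SetLike σ A] [SubringClass σ A] (S : σ) {H : A⟦X⟧} {n : ℕ}

lemma coeff_one_mem (n : ℕ) : coeff n (1 : A⟦X⟧) ∈ S := by
  rw [coeff_one]
  split_ifs
  exacts [one_mem S, zero_mem S]

lemma coeff_pow_mem_of_lt (hS : ∀ i < n, coeff i H ∈ S) (k : ℕ) :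
    ∀ j < n, coeff j (H ^ k) ∈ S := by
  induction k with
  | zero => exact fun j _ => pow_zero H ▸ coeff_one_mem S j
  | succ k ih =>
    intro j hj
    rw [pow_succ, coeff_mul]
    exact sum_mem fun p hp => mul_mem
      (ih _ ((Finset.HasAntidiagonal.antidiagonal.fst_le hp).trans_lt hj))
      (hS _ ((Finset.HasAntidiagonal.antidiagonal.snd_le hp).trans_lt hj))

/-- Writing `H = X * H₁`, the coefficient `[Xⁿ] Hᵏ = [X^(n-k)] H₁ᵏ` only involves the
coefficients of `H` of index `≤ n - k + 1 < n` once `k ≥ 2`. -/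
lemma coeff_pow_mem_of_ne_one (h0 : constantCoeff H = 0) (hS : ∀ i < n, coeff i H ∈ S)
    {k : ℕ} (hk : k ≠ 1) : coeff n (H ^ k) ∈ S := by
  rcases k with _ | _ | k
  · exact pow_zero H ▸ coeff_one_mem S n
  · exact absurd rfl hk
  obtain ⟨H₁, rfl⟩ := X_dvd_iff.mpr h0
  rw [mul_pow, coeff_X_pow_mul']
  split_ifs with hkn
  · refine coeff_pow_mem_of_lt S (n := n - 1) (fun i hi => ?_) _ _ (by omega)
    simpa using hS (i + 1) (by omega)
  · exact zero_mem S

end SubringClass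

lemma map_exp_subst {A B : Type*} [CommRing A] [CommRing B] [Algebra ℚ A] [Algebra ℚ B]
    (φ : A →+* B) {H : A⟦X⟧} (h0 : constantCoeff H = 0) :
    map φ ((exp A).subst H) = (exp B).subst (map φ H) := by
  have h := map_subst (h := φ) (HasSubst.of_constantCoeff_zero' h0) (exp A)
  rw [map_exp] at h
  exact h

lemma one_sub_smul_X_mul_geometric (a : ℚ) : (1 - a • X : ℚ⟦X⟧) * mk (a ^ ·) = 1 := by
  have := congrArg (rescale a) (mk_one_mul_one_sub_eq_one (S := ℚ))
  rw [map_mul, map_sub, map_one, rescale_X, rescale_mk] at this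
  simpa [mul_comm, smul_eq_C_mul] using this

/-- `exp(L) = 1 - a X` forces `L = log(1 - a X)`: differentiating gives
`(1 - a X) L' = -a`. -/
lemma coeff_eq_of_exp_subst_eq_one_sub_smul_X {L : ℚ⟦X⟧} (h0 : constantCoeff L = 0) {a : ℚ}
    (h : (exp ℚ).subst L = 1 - a • X) {n : ℕ} (hn : 0 < n) : coeff n L = -a ^ n / n := by
  have hD : (1 - a • X) * d⁄dX ℚ L = -C a := by
    have := derivative_subst (f := exp ℚ) (HasSubst.of_constantCoeff_zero' h0)
    rw [derivative_exp, h] at this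
    rw [← this]
    simp [smul_eq_C_mul]
  have hne : (1 - a • X : ℚ⟦X⟧) ≠ 0 := fun h1 => by
    simpa using congrArg constantCoeff h1
  have hL' : d⁄dX ℚ L = -C a * mk (a ^ ·) := mul_left_cancel₀ hne <| by
    rw [hD, mul_left_comm, one_sub_smul_X_mul_geometric, mul_one]
  obtain ⟨n, rfl⟩ := Nat.exists_eq_add_one_of_ne_zero hn.ne'
  have := congrArg (coeff n) hL'
  rw [coeff_derivative, ← map_neg, coeff_C_mul, coeff_mk] at this
  field_simp
  push_cast
  linear_combination this

end PowerSeries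

lemma pexp_eq_exp_subst {H : K⟦X⟧} (h0 : constantCoeff H = 0) : pexp H = (exp K).subst H := by
  ext n
  rw [pexp, coeff_mk, coeff_subst' (HasSubst.of_constantCoeff_zero' h0),
    finsum_eq_sum_of_support_subset (s := Finset.range (n + 1))]
  · refine Finset.sum_congr rfl fun k _ => ?_
    simp [coeff_exp]
  · intro k hk
    by_contra hkn
    simp only [Finset.coe_range, Set.mem_Iio, not_lt] at hkn
    have hpow : coeff n (H ^ k) = 0 := coeff_of_lt_order n <|
      lt_of_lt_of_le (by exact_mod_cast hkn) (le_order_pow_of_constantCoeff_eq_zero k h0)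
    exact hk (by simp only [hpow, smul_zero])

lemma coeff_mem_of_coeff_pexp_mem (S : Subalgebra ℚ K) {H : K⟦X⟧} (h0 : constantCoeff H = 0)
    {n : ℕ} (hS : ∀ i < n, coeff i H ∈ S) (hE : coeff n (pexp H) ∈ S) : coeff n H ∈ S := by
  rcases eq_or_ne n 0 with rfl | hn
  · simp [h0]
  have hsplit : coeff n (pexp H) = coeff n H +
      ∑ k ∈ (Finset.range (n + 1)).erase 1, (k.factorial : K)⁻¹ * coeff n (H ^ k) := by
    rw [pexp, coeff_mk, ← Finset.sum_erase_add _ _ (Finset.mem_range.2 (by omega : 1 < n + 1))]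
    simp [add_comm]
  have hrest : ∑ k ∈ (Finset.range (n + 1)).erase 1, (k.factorial : K)⁻¹ * coeff n (H ^ k) ∈ S :=
    sum_mem fun k hk => mul_mem (S.inv_natCast_mem _)
      (coeff_pow_mem_of_ne_one S h0 hS (Finset.ne_of_mem_erase hk))
  rw [hsplit] at hE
  simpa using sub_mem hE hrest

/-- Lift `H` to power series over `regularAtOne` and push `exp` along the inclusion into `K` and
along `evalOne`. -/
lemma ev1_coeff_pexp {H : K⟦X⟧} (h0 : constantCoeff H = 0) (hH : ∀ n, coeff n H ∈ regularAtOne)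
    (n : ℕ) : ev1 (coeff n (pexp H)) = coeff n ((exp ℚ).subst (mk fun i => ev1 (coeff i H))) := by
  set H' : regularAtOne⟦X⟧ := mk fun i => ⟨coeff i H, hH i⟩
  have h0' : constantCoeff H' = 0 :=
    Subtype.ext (by simp [H', ← coeff_zero_eq_constantCoeff_apply, h0])
  have hH' : map regularAtOne.val H' = H := by ext; simp [H']
  have hL : (mk fun i => ev1 (coeff i H)) = map evalOne H' := by ext; simp [H', evalOne_apply]
  rw [hL, pexp_eq_exp_subst h0, ← hH', ← map_exp_subst _ h0', coeff_map, ← map_exp_subst _ h0',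
    coeff_map]
  rfl

/-- The exponent `∑_{k ≥ 1} ψ_k(g)/k` in `pExp g = exp(∑_{k ≥ 1} ψ_k(g)/k)`. -/
noncomputable def adamsSeries (g : K⟦X⟧) : K⟦X⟧ :=
  mk fun n => ∑ k ∈ n.divisors, (k : K)⁻¹ * psiQ k (coeff (n / k) g)

lemma pExp_eq_pexp_adamsSeries (g : K⟦X⟧) : pExp g = pexp (adamsSeries g) := rfl

lemma constantCoeff_adamsSeries (g : K⟦X⟧) : constantCoeff (adamsSeries g) = 0 := by
  rw [← coeff_zero_eq_constantCoeff_apply, adamsSeries, coeff_mk, Nat.divisors_zero,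
    Finset.sum_empty]

lemma inv_natCast_mul_psiQ_mem {r : K} (hr : r ∈ regularAtOne) (k : ℕ) :
    (k : K)⁻¹ * psiQ k r ∈ regularAtOne :=
  mul_mem (regularAtOne.inv_natCast_mem k) (psiQ_mem hr k)

lemma coeff_adamsSeries_mem {g : K⟦X⟧} (hg : ∀ n, coeff n g ∈ regularAtOne) (n : ℕ) :
    coeff n (adamsSeries g) ∈ regularAtOne := by
  rw [adamsSeries, coeff_mk]
  exact sum_mem fun k _ => inv_natCast_mul_psiQ_mem (hg _) k

lemma coeff_adamsSeries_sub_mem {g : K⟦X⟧} {n : ℕ} (hn : n ≠ 0)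
    (hg : ∀ j < n, coeff j g ∈ regularAtOne) :
    coeff n (adamsSeries g) - coeff n g ∈ regularAtOne := by
  rw [adamsSeries, coeff_mk, ← Finset.sum_erase_add _ _ (Nat.one_mem_divisors.2 hn)]
  simp only [Nat.cast_one, inv_one, one_mul, Nat.div_one, psiQ_one, add_sub_cancel_right]
  refine sum_mem fun k hk => inv_natCast_mul_psiQ_mem (hg _ ?_) k
  obtain ⟨hk1, hkn⟩ := Finset.mem_erase.1 hk
  exact Nat.div_lt_self (Nat.pos_of_ne_zero hn)
    (lt_of_le_of_ne (Nat.pos_of_mem_divisors hkn) (Ne.symm hk1))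

lemma ev1_coeff_adamsSeries {g : K⟦X⟧} (hg : ∀ n, coeff n g ∈ regularAtOne) (n : ℕ) :
    ev1 (coeff n (adamsSeries g)) = ∑ k ∈ n.divisors, (k : ℚ)⁻¹ * ev1 (coeff (n / k) g) := by
  rw [adamsSeries, coeff_mk, ev1_sum _ fun k => inv_natCast_mul_psiQ_mem (hg _) k]
  refine Finset.sum_congr rfl fun k _ => ?_
  rw [ev1_mul (regularAtOne.inv_natCast_mem k) (psiQ_mem (hg _) k), ev1_psiQ (hg _)]
  simpa using congrArg (· * ev1 (coeff (n / k) g)) (ev1_algebraMap (k : ℚ)⁻¹)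

theorem coeff_mem_regularAtOne_of_pExp {g : K⟦X⟧} (hg0 : constantCoeff g = 0)
    (hE : ∀ n, coeff n (pExp g) ∈ regularAtOne) (n : ℕ) : coeff n g ∈ regularAtOne := by
  induction n using Nat.strong_induction_on with
  | _ n ih =>
  rcases eq_or_ne n 0 with rfl | hn
  · simp [hg0]
  have hA : ∀ i < n, coeff i (adamsSeries g) ∈ regularAtOne := by
    intro i hi
    rcases eq_or_ne i 0 with rfl | hi0
    · simp [constantCoeff_adamsSeries]
    · simpa using add_mem (coeff_adamsSeries_sub_mem hi0 fun j hj => ih j (hj.trans hi)) (ih i hi)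
  have hAn := coeff_mem_of_coeff_pexp_mem _ (constantCoeff_adamsSeries g) hA (hE n)
  simpa using sub_mem hAn (coeff_adamsSeries_sub_mem hn ih)

theorem sum_divisors_ev1_coeff_of_pExp {g : K⟦X⟧} (hg0 : constantCoeff g = 0)
    (hE : ∀ n, coeff n (pExp g) ∈ regularAtOne) {a : ℚ}
    (hval : (mk fun n => ev1 (coeff n (pExp g))) = 1 - a • X) {n : ℕ} (hn : 0 < n) :
    ∑ k ∈ n.divisors, (k : ℚ)⁻¹ * ev1 (coeff (n / k) g) = -a ^ n / n := by
  have hg := coeff_mem_regularAtOne_of_pExp hg0 hE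
  set L : ℚ⟦X⟧ := mk fun i => ev1 (coeff i (adamsSeries g))
  have hL0 : constantCoeff L = 0 := by
    rw [← coeff_zero_eq_constantCoeff_apply, coeff_mk, coeff_zero_eq_constantCoeff_apply,
      constantCoeff_adamsSeries]
    exact map_zero evalOne
  have hexp : (exp ℚ).subst L = 1 - a • X := by
    rw [← hval]
    ext i
    rw [coeff_mk, pExp_eq_pexp_adamsSeries,
      ev1_coeff_pexp (constantCoeff_adamsSeries g) (coeff_adamsSeries_mem hg)]
  rw [← ev1_coeff_adamsSeries hg, ← coeff_mk n (fun i => ev1 (coeff i (adamsSeries g)))]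
  exact coeff_eq_of_exp_subst_eq_one_sub_smul_X hL0 hexp hn

theorem eq_moebius_of_sum_divisors_inv_mul {G : ℕ → ℚ} {a : ℚ}
    (h : ∀ n : ℕ, 0 < n → ∑ k ∈ n.divisors, (k : ℚ)⁻¹ * G (n / k) = a ^ n / n) {n : ℕ}
    (hn : 0 < n) :
    G n = (1 / n : ℚ) * ∑ k ∈ n.divisors, (ArithmeticFunction.moebius (n / k) : ℚ) * a ^ k := by
  have hmul : ∀ n : ℕ, 0 < n → ∑ e ∈ n.divisors, (e : ℚ) * G e = a ^ n := by
    intro n hn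
    rw [← Nat.sum_div_divisors, ← mul_div_cancel₀ (a ^ n) (Nat.cast_ne_zero.2 hn.ne'), ← h n hn,
      Finset.mul_sum]
    refine Finset.sum_congr rfl fun k hk => ?_
    rw [Nat.cast_div (Nat.dvd_of_mem_divisors hk)
      (Nat.cast_ne_zero.2 (Nat.pos_of_mem_divisors hk).ne')]
    ring
  have := (ArithmeticFunction.sum_eq_iff_sum_mul_moebius_eq.1 hmul) n hn
  rw [Nat.sum_divisorsAntidiagonal' (f := fun x y => (ArithmeticFunction.moebius x : ℚ) * a ^ y)]
    at this
  rw [this]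
  field_simp

theorem linear_term_loop_quiver_general (m : ℕ) (f : ℕ → K)
    (E : PowerSeries K)
    (hE : E = pExp (((PowerSeries.mk fun d => if d = 0 then 0 else f d) - PowerSeries.X) *
            PowerSeries.C (1 - q)⁻¹))
    (hwell : ∀ n : ℕ, (PowerSeries.coeff n E).denom.eval 1 ≠ 0)
    (hval : (PowerSeries.mk fun n => ev1 (PowerSeries.coeff n E))
              = 1 - (m : ℚ) • PowerSeries.X) :
    ∀ d : ℕ, 2 ≤ d →
      (f d / (q - 1)).denom.eval 1 ≠ 0 ∧
      ev1 (f d / (q - 1)) =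
        ((1 : ℚ) / d) * ∑ k ∈ d.divisors,
          (ArithmeticFunction.moebius (d / k) : ℚ) * (m : ℚ) ^ k := by
  set g : K⟦X⟧ := ((mk fun d => if d = 0 then 0 else f d) - X) * C (1 - q)⁻¹
  subst hE
  have hg0 : constantCoeff g = 0 := by simp [g]
  have hg := coeff_mem_regularAtOne_of_pExp hg0 hwell
  have hsum : ∀ n : ℕ, 0 < n → ∑ k ∈ n.divisors, (k : ℚ)⁻¹ * -ev1 (coeff (n / k) g) = m ^ n / n :=
    fun n hn => by
      simp only [mul_neg, Finset.sum_neg_distrib, sum_divisors_ev1_coeff_of_pExp hg0 hwell hval hn,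
        neg_div, neg_neg]
  intro d hd
  have hfd : f d / (q - 1) = -coeff d g := by
    rw [coeff_mul_C, map_sub, coeff_mk, coeff_X, if_neg (by omega), if_neg (by omega), sub_zero,
      ← neg_sub q 1, inv_neg, div_eq_mul_inv, mul_neg, neg_neg]
  rw [hfd]
  refine ⟨neg_mem (hg d), ?_⟩
  rw [ev1_neg (hg d)]
  exact eq_moebius_of_sum_divisors_inv_mul (G := fun n => -ev1 (coeff n g)) hsum (by omega)

/-- let `f_d(q) ∈ ℚ(q)` (d ≥ 1) with `f_1 = q^m`, set
`a(q) = ∑_{d≥1} f_d(q) x^d`, and suppose that `Exp((a(q) - x)/(1-q))` is well defined at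
q = 1 with value `1 - m x`. Then for all d ≥ 2, `f_d(q)/(q-1)` is well defined at q = 1 and
its value there is `(1/d) ∑_{k|d} μ(d/k) m^k`. -/
theorem linear_term_loop_quiver (m : ℕ) (hm : 1 ≤ m) (f : ℕ → K) (hf1 : f 1 = q ^ m)
    (E : PowerSeries K)
    (hE : E = pExp (((PowerSeries.mk fun d => if d = 0 then 0 else f d) - PowerSeries.X) *
            PowerSeries.C (1 - q)⁻¹))
    (hwell : ∀ n : ℕ, (PowerSeries.coeff n E).denom.eval 1 ≠ 0)
    (hval : (PowerSeries.mk fun n => ev1 (PowerSeries.coeff n E))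
              = 1 - (m : ℚ) • PowerSeries.X) :
    ∀ d : ℕ, 2 ≤ d →
      (f d / (q - 1)).denom.eval 1 ≠ 0 ∧
      ev1 (f d / (q - 1)) =
        ((1 : ℚ) / d) * ∑ k ∈ d.divisors,
          (ArithmeticFunction.moebius (d / k) : ℚ) * (m : ℚ) ^ k :=
  linear_term_loop_quiver_general m f E hE hwell hval
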